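/- Let P be a Markov kernel satisfying the drift condition PV(x) ≤ λ V(x) + b·1_S(x) for all x, where V : X → [1, ∞], λ < 1, b < ∞, and S is measurable. Then for every j ∈ ℕ, the function V̂ = V^{1/j} satisfies P V̂(x) ≤ λ^{1/j} V̂(x) + b^{1/j}·1_S(x) for all x ∈ X. -/

import Mathlib

open MeasureTheory ProbabilityTheory
open scoped ENNReal

/-! Jensen's inequality for the concave map `t ↦ t ^ (1/j)` under the probability measure `P x`
gives `P V̂ ≤ (P V) ^ (1/j)`; raising the drift inequality to the power `1/j` and using the
subadditivity `(a + c) ^ (1/j) ≤ a ^ (1/j) + c ^ (1/j)` finishes the proof. -/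

theorem lintegral_rpow_le_rpow_lintegral_of_measurable {α : Type*} [MeasurableSpace α]
    {μ : Measure α} [IsProbabilityMeasure μ] {f : α → ℝ≥0∞} (hf : Measurable f)
    {p : ℝ} (hp0 : 0 < p) (hp1 : p ≤ 1) :
    ∫⁻ x, f x ^ p ∂μ ≤ (∫⁻ x, f x ∂μ) ^ p := by
  -- monotonicity of `‖f ^ p‖_q` in `q` on a probability space, between `q = 1` and `q = 1/p`
  have key := eLpNorm'_le_eLpNorm'_of_exponent_le one_pos (one_le_inv_iff₀.2 ⟨hp0, hp1⟩) μ
    (hf.pow_const p).aestronglyMeasurable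
  simpa [eLpNorm'_eq_lintegral_enorm, ← ENNReal.rpow_mul, hp0.ne'] using key

theorem lintegral_rpow_le_rpow_lintegral {α : Type*} [MeasurableSpace α]
    {μ : Measure α} [IsProbabilityMeasure μ] (f : α → ℝ≥0∞)
    {p : ℝ} (hp0 : 0 < p) (hp1 : p ≤ 1) :
    ∫⁻ x, f x ^ p ∂μ ≤ (∫⁻ x, f x ∂μ) ^ p := by
  -- `f ^ p` has a measurable minorant `g` with the same integral, and `g ^ (1/p) ≤ f`
  obtain ⟨g, hg, hgf, hfg⟩ := exists_measurable_le_lintegral_eq μ (fun x ↦ f x ^ p)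
  have hroot : ∀ x, g x ^ p⁻¹ ≤ f x := fun x ↦
    (ENNReal.rpow_inv_le_iff hp0).2 (hgf x)
  calc ∫⁻ x, f x ^ p ∂μ = ∫⁻ x, (g x ^ p⁻¹) ^ p ∂μ := by
        simp [hfg, ← ENNReal.rpow_mul, hp0.ne']
    _ ≤ (∫⁻ x, g x ^ p⁻¹ ∂μ) ^ p :=
        lintegral_rpow_le_rpow_lintegral_of_measurable (hg.pow_const _) hp0 hp1
    _ ≤ (∫⁻ x, f x ∂μ) ^ p := by gcongr; exact hroot _

theorem rpow_mul_indicator_one {α : Type*} (s : Set α) (b : ℝ≥0∞) {p : ℝ} (hp : 0 < p) (x : α) :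
    (b * s.indicator 1 x) ^ p = b ^ p * s.indicator 1 x := by
  by_cases hx : x ∈ s <;> simp [hx, hp]

theorem drift_rpow_general {X : Type*} [MeasurableSpace X]
    (P : Kernel X X) [IsMarkovKernel P]
    (V : X → ℝ≥0∞)
    (S : Set X)
    (lam b : ℝ≥0∞)
    (hdrift : ∀ x, ∫⁻ y, V y ∂(P x) ≤ lam * V x + b * S.indicator 1 x)
    (j : ℕ) (hj : 1 ≤ j) :
    ∀ x, ∫⁻ y, V y ^ (1 / (j : ℝ)) ∂(P x)
      ≤ lam ^ (1 / (j : ℝ)) * V x ^ (1 / (j : ℝ))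
        + b ^ (1 / (j : ℝ)) * S.indicator 1 x := by
  intro x
  have hp0 : 0 < 1 / (j : ℝ) := by positivity
  have hp1 : 1 / (j : ℝ) ≤ 1 := div_le_one_of_le₀ (by exact_mod_cast hj) (by positivity)
  calc ∫⁻ y, V y ^ (1 / (j : ℝ)) ∂(P x)
      ≤ (∫⁻ y, V y ∂(P x)) ^ (1 / (j : ℝ)) := lintegral_rpow_le_rpow_lintegral V hp0 hp1
    _ ≤ (lam * V x + b * S.indicator 1 x) ^ (1 / (j : ℝ)) := by gcongr; exact hdrift x
    _ ≤ (lam * V x) ^ (1 / (j : ℝ)) + (b * S.indicator 1 x) ^ (1 / (j : ℝ)) :=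
        ENNReal.rpow_add_le_add_rpow _ _ hp0.le hp1
    _ = lam ^ (1 / (j : ℝ)) * V x ^ (1 / (j : ℝ)) + b ^ (1 / (j : ℝ)) * S.indicator 1 x := by
        rw [ENNReal.mul_rpow_of_nonneg _ _ hp0.le, rpow_mul_indicator_one S b hp0 x]

/-- If a Markov kernel `P` satisfies the drift condition `PV ≤ λV + b·1_S`, then for each
`j ≥ 1` the function `V̂ = V^{1/j}` satisfies `P V̂ ≤ λ^{1/j} V̂ + b^{1/j}·1_S`. -/
theorem drift_rpow {X : Type*} [MeasurableSpace X]
    (P : Kernel X X) [IsMarkovKernel P]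
    (V : X → ℝ≥0∞) (hV : Measurable V) (hV1 : ∀ x, 1 ≤ V x)
    (S : Set X) (hS : MeasurableSet S)
    (lam b : ℝ≥0∞) (hlam : lam < 1) (hb : b < ⊤)
    (hdrift : ∀ x, ∫⁻ y, V y ∂(P x) ≤ lam * V x + b * S.indicator 1 x)
    (j : ℕ) (hj : 1 ≤ j) :
    ∀ x, ∫⁻ y, V y ^ (1 / (j : ℝ)) ∂(P x)
      ≤ lam ^ (1 / (j : ℝ)) * V x ^ (1 / (j : ℝ))
        + b ^ (1 / (j : ℝ)) * S.indicator 1 x :=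
  drift_rpow_general P V S lam b hdrift j hj
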